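/- Fix positive parameters P_s, G_{s,d}, G_{s,r}, G_{r,d}, σ², W, P, β and let Γ_{s,d} = P_s G_{s,d}/σ² and π̲ = W/(2·ln2·(1+Γ_{s,d}+Γ_{s,r,d}(P))). For any price π with π̲ < π < W/(2·ln2·(1+Γ_{s,d})), the quantity f^s(π) = (P_s G_{s,r}+σ²)σ² / ( P G_{r,d} P_s G_{s,r}/(W/(2π·ln2) − 1 − Γ_{s,d}) − (P_s G_{s,r}+P G_{r,d}+σ²)σ² ) is finite and strictly positive, and for any opponents' total bid b_{-i} ≥ 0, the bid b = f^s(π)·(b_{-i}+β) yields allocated power P_{r,d} = bP/(b+b_{-i}+β) satisfying Γ_{s,r,d}(P_{r,d}) = W/(2π·ln2) − (1+Γ_{s,d}); i.e., bidding according to f^s achieves exactly the target SNR increase x*(π). -/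

import Mathlib

/-- The amplify-and-forward relayed SNR as a function of the relay power. -/
noncomputable def relSNR (Ps Gsr Grd σ2 Pr : ℝ) : ℝ :=
  Pr * Ps * Grd * Gsr / (σ2 * (Pr * Grd + Ps * Gsr + σ2))

/-- The best-response slope `f^s(π)` of the SNR auction. -/
noncomputable def fs (Ps Gsd Gsr Grd σ2 W P π : ℝ) : ℝ :=
  (Ps * Gsr + σ2) * σ2 /
    (P * Grd * Ps * Gsr / (W / (2 * π * Real.log 2) - 1 - Ps * Gsd / σ2)
      - (Ps * Gsr + P * Grd + σ2) * σ2)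

lemma aux_key (Ps Gsr Grd s P x t c : ℝ)
    (hPs : 0 < Ps) (hGsr : 0 < Gsr) (hGrd : 0 < Grd) (hs : 0 < s)
    (hP : 0 < P) (hx : 0 < x) (ht : 0 < t)
    (hkey : x * (s * (P * Grd + Ps * Gsr + s)) < Ps * Gsr * (P * Grd))
    (hc : c = (Ps * Gsr + s) * s /
        (P * Grd * Ps * Gsr / x - (Ps * Gsr + P * Grd + s) * s)) :
    0 < c ∧ relSNR Ps Gsr Grd s (c * t * P / (c * t + t)) = x := by
  have hA : 0 < Ps * Gsr := mul_pos hPs hGsr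
  have hB : 0 < P * Grd := mul_pos hP hGrd
  have hD : 0 < P * Grd * Ps * Gsr / x - (Ps * Gsr + P * Grd + s) * s := by
    rw [sub_pos, lt_div_iff₀ hx]
    nlinarith [hkey]
  have hDne : P * Grd * Ps * Gsr / x - (Ps * Gsr + P * Grd + s) * s ≠ 0 := ne_of_gt hD
  have hE : 0 < Ps * Gsr * (P * Grd) - x * ((Ps * Gsr + P * Grd + s) * s) := by
    nlinarith [hkey]
  have hc0 : 0 < c := by
    rw [hc]; exact div_pos (by positivity) hD
  refine ⟨hc0, ?_⟩
  have hM : 0 < Ps * Gsr - x * s := by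
    nlinarith [hkey, mul_pos hA hs, mul_pos hA hA]
  have hc1 : 0 < c + 1 := by linarith
  have hcE : c = (Ps * Gsr + s) * s * x /
      (Ps * Gsr * (P * Grd) - x * ((Ps * Gsr + P * Grd + s) * s)) := by
    rw [hc, div_eq_div_iff hDne hE.ne']
    field_simp
  have hqval : c * t * P / (c * t + t)
      = (Ps * Gsr + s) * s * x * P / (P * Grd * (Ps * Gsr - x * s)) := by
    have e1 : c * t + t = (c + 1) * t := by ring
    have e2 : c * t * P = c * P * t := by ring
    rw [e1, e2, mul_div_mul_right _ _ (ne_of_gt ht)]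
    rw [div_eq_div_iff hc1.ne' (by positivity : (0:ℝ) < P * Grd * (Ps * Gsr - x * s)).ne']
    rw [hcE]
    field_simp [show Ps * Gsr * P * Grd - s * x * (Ps * Gsr + P * Grd + s) ≠ 0 by nlinarith]
    ring
  rw [hqval]
  unfold relSNR
  have h1 : P * Grd * (Ps * Gsr - x * s) ≠ 0 := by positivity
  have h2 : s * ((Ps * Gsr + s) * s * x * P / (P * Grd * (Ps * Gsr - x * s)) * Grd
      + Ps * Gsr + s) ≠ 0 := by positivity
  rw [div_eq_iff h2]
  field_simp [show Ps * Gsr - s * x ≠ 0 by nlinarith]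
  ring

/-- For prices `π̲ < π < W/(2·ln2·(1+Γ_{s,d}))`, the slope `f^s(π)` is strictly
positive (hence finite), and for any opponents' total bid `b₋ᵢ ≥ 0` the bid
`b = f^s(π)·(b₋ᵢ+β)` yields an allocated power whose relayed SNR equals exactly
the target SNR increase `x*(π) = W/(2π·ln2) − (1+Γ_{s,d})`. -/
theorem fs_achieves_target (Ps Gsd Gsr Grd σ2 W P β π : ℝ)
    (hPs : 0 < Ps) (hGsd : 0 < Gsd) (hGsr : 0 < Gsr) (hGrd : 0 < Grd)
    (hσ2 : 0 < σ2) (hW : 0 < W) (hP : 0 < P) (hβ : 0 < β)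
    (hπlow : W / (2 * Real.log 2 * (1 + Ps * Gsd / σ2 + relSNR Ps Gsr Grd σ2 P)) < π)
    (hπhigh : π < W / (2 * Real.log 2 * (1 + Ps * Gsd / σ2))) :
    0 < fs Ps Gsd Gsr Grd σ2 W P π ∧
    ∀ bmi : ℝ, 0 ≤ bmi →
      relSNR Ps Gsr Grd σ2
        ((fs Ps Gsd Gsr Grd σ2 W P π * (bmi + β)) * P /
          (fs Ps Gsd Gsr Grd σ2 W P π * (bmi + β) + bmi + β)) =
        W / (2 * π * Real.log 2) - (1 + Ps * Gsd / σ2) := by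
  have hL : (0:ℝ) < Real.log 2 := Real.log_pos (by norm_num)
  have hR : relSNR Ps Gsr Grd σ2 P
      = P * Ps * Grd * Gsr / (σ2 * (P * Grd + Ps * Gsr + σ2)) := rfl
  have hRpos : 0 < relSNR Ps Gsr Grd σ2 P := by rw [hR]; positivity
  have hΓ : 0 < Ps * Gsd / σ2 := by positivity
  have hd1 : 0 < 2 * Real.log 2 * (1 + Ps * Gsd / σ2 + relSNR Ps Gsr Grd σ2 P) := by
    have h1 : (0:ℝ) < 1 + Ps * Gsd / σ2 + relSNR Ps Gsr Grd σ2 P := by linarith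
    positivity
  have hπ : 0 < π := lt_trans (div_pos hW hd1) hπlow
  have h2πL : 0 < 2 * π * Real.log 2 := by positivity
  set x := W / (2 * π * Real.log 2) - 1 - Ps * Gsd / σ2 with hxdef
  have hx : 0 < x := by
    have hi1 : π * (2 * Real.log 2 * (1 + Ps * Gsd / σ2)) < W :=
      (lt_div_iff₀ (by positivity)).mp hπhigh
    have h2 : 1 + Ps * Gsd / σ2 < W / (2 * π * Real.log 2) :=
      (lt_div_iff₀ h2πL).mpr (by nlinarith [hi1])
    rw [hxdef]; linarith
  have hxR : x < relSNR Ps Gsr Grd σ2 P := by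
    have hi2 : W < π * (2 * Real.log 2 * (1 + Ps * Gsd / σ2 + relSNR Ps Gsr Grd σ2 P)) :=
      (div_lt_iff₀ hd1).mp hπlow
    have h2 : W / (2 * π * Real.log 2) < 1 + Ps * Gsd / σ2 + relSNR Ps Gsr Grd σ2 P :=
      (div_lt_iff₀ h2πL).mpr (by nlinarith [hi2])
    rw [hxdef]; linarith
  have hkey : x * (σ2 * (P * Grd + Ps * Gsr + σ2)) < Ps * Gsr * (P * Grd) := by
    rw [hR] at hxR
    have := (lt_div_iff₀ (by positivity : (0:ℝ) < σ2 * (P * Grd + Ps * Gsr + σ2))).mp hxR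
    nlinarith [this]
  have hfseq : fs Ps Gsd Gsr Grd σ2 W P π
      = (Ps * Gsr + σ2) * σ2 /
        (P * Grd * Ps * Gsr / x - (Ps * Gsr + P * Grd + σ2) * σ2) := by
    rw [hxdef]; rfl
  constructor
  · exact (aux_key Ps Gsr Grd σ2 P x 1 _ hPs hGsr hGrd hσ2 hP hx one_pos hkey hfseq).1
  · intro bmi hbmi
    have ht : 0 < bmi + β := by linarith
    obtain ⟨-, h⟩ :=
      aux_key Ps Gsr Grd σ2 P x (bmi + β) _ hPs hGsr hGrd hσ2 hP hx ht hkey hfseq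
    have e : fs Ps Gsd Gsr Grd σ2 W P π * (bmi + β) + bmi + β
        = fs Ps Gsd Gsr Grd σ2 W P π * (bmi + β) + (bmi + β) := by ring
    rw [e, h, hxdef]; ring
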